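/- Let d₁, d₂ ≥ 1 with d₁·d₂ ≥ 2, and let v be a unit vector in ℂ^{d₁} ⊗ ℂ^{d₂}. Equip the unitary group U(d₁d₂) with its Haar probability measure, and let Tr₂ denote the partial trace over the second factor ℂ^{d₂}. Then ∫_{U(d₁d₂)} Tr[ ( Tr₂( U vv* U* ) )² ] dU = (d₁ + d₂)/(d₁·d₂ + 1). -/

import Mathlib

/-!
Write `w = U v`. The purity is `∑ w_{ij} w̄_{i'j} w_{i'j'} w̄_{ij'}`, so only the fourth moments
`E[w_a w̄_b w_c w̄_d]` of the Haar-random unit vector `w` enter. Left invariance of Haar measure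
under diagonal phases kills every such moment unless `{a, c} = {b, d}`. Invariance under a unitary
mixing two coordinates `a ≠ b` gives `E|w_a|⁴ = E|w_b|⁴ = 2 E[|w_a|² |w_b|²]`, so all moments are
one constant times `δ_ab δ_cd + δ_ad δ_cb`, and `‖w‖ = 1` fixes the constant to `1 / (N (N + 1))`.
Summing over the index pattern of the purity gives `(d₁ + d₂) / (d₁ d₂ + 1)`.
-/

open MeasureTheory Matrix

/-- Partial trace over the second factor of a complex matrix indexed by `Fin d₁ × Fin d₂`. -/
noncomputable def ptrace2 {d₁ d₂ : ℕ}
    (M : Matrix (Fin d₁ × Fin d₂) (Fin d₁ × Fin d₂) ℂ) :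
    Matrix (Fin d₁) (Fin d₁) ℂ :=
  Matrix.of fun i i' => ∑ j : Fin d₂, M (i, j) (i', j)

open scoped ComplexConjugate

namespace Matrix
variable {n : Type*} [Fintype n]

theorem mul_vecMulVec_star_mul_conjTranspose {m : Type*} (M : Matrix m n ℂ) (v : n → ℂ) :
    M * vecMulVec v (star v) * Mᴴ = vecMulVec (M *ᵥ v) (star (M *ᵥ v)) := by
  rw [mul_vecMulVec, vecMulVec_mul, star_mulVec]

variable [DecidableEq n]

theorem diagonal_mem_unitaryGroup {d : n → ℂ} (hd : ∀ x, conj (d x) * d x = 1) :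
    diagonal d ∈ unitaryGroup n ℂ := by
  rw [mem_unitaryGroup_iff', star_eq_conjTranspose, diagonal_conjTranspose,
    diagonal_mul_diagonal, ← diagonal_one]
  exact congrArg diagonal (funext hd)

theorem one_sub_two_smul_vecMulVec_mem_unitaryGroup {y : n → ℂ} (hy : star y ⬝ᵥ y = 1) :
    1 - (2 : ℂ) • vecMulVec y (star y) ∈ unitaryGroup n ℂ := by
  have hP : vecMulVec y (star y) * vecMulVec y (star y) = vecMulVec y (star y) := by
    rw [vecMulVec_mul_vecMulVec, hy, one_smul]
  rw [mem_unitaryGroup_iff', star_eq_conjTranspose, conjTranspose_sub, conjTranspose_one,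
    conjTranspose_smul, conjTranspose_vecMulVec, star_star, star_ofNat, sub_mul, mul_sub,
    mul_sub, smul_mul_smul_comm, hP]
  simp only [one_mul, mul_one]
  module

end Matrix

namespace HaarUnitary
variable {n : Type*}

def quartic (w : n → ℂ) (a b c d : n) : ℂ := w a * conj (w b) * (w c * conj (w d))

theorem quartic_mul (u w : n → ℂ) (a b c d : n) :
    quartic (u * w) a b c d = quartic u a b c d * quartic w a b c d := by
  simp only [quartic, Pi.mul_apply, map_mul]
  ring

variable [Fintype n] [DecidableEq n]

theorem norm_mulVec_apply_le (U : unitaryGroup n ℂ) (v : n → ℂ) (a : n) :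
    ‖((U : Matrix n n ℂ) *ᵥ v) a‖ ≤ ∑ p, ‖v p‖ := by
  refine (norm_sum_le _ _).trans (Finset.sum_le_sum fun p _ => ?_)
  rw [norm_mul]
  exact mul_le_of_le_one_left (norm_nonneg _) (entry_norm_bound_of_unitary U.2 a p)

theorem continuous_mulVec_apply (v : n → ℂ) (a : n) :
    Continuous fun U : unitaryGroup n ℂ => ((U : Matrix n n ℂ) *ᵥ v) a :=
  continuous_finsetSum _ fun p _ =>
    (continuous_subtype_val.matrix_elem a p).mul continuous_const

theorem sum_mulVec_mul_conj (U : unitaryGroup n ℂ) (v : n → ℂ) :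
    ∑ x, ((U : Matrix n n ℂ) *ᵥ v) x * conj (((U : Matrix n n ℂ) *ᵥ v) x) = star v ⬝ᵥ v := by
  have hU : (U : Matrix n n ℂ)ᴴ * U = 1 := by
    rw [← star_eq_conjTranspose]
    exact U.2.1
  calc ∑ x, ((U : Matrix n n ℂ) *ᵥ v) x * conj (((U : Matrix n n ℂ) *ᵥ v) x)
      = star ((U : Matrix n n ℂ) *ᵥ v) ⬝ᵥ ((U : Matrix n n ℂ) *ᵥ v) :=
        Finset.sum_congr rfl fun x _ => mul_comm _ _
    _ = star v ⬝ᵥ v := by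
        rw [star_mulVec, dotProduct_mulVec, vecMul_vecMul, hU, vecMul_one]

section Haar
variable [MeasurableSpace (unitaryGroup n ℂ)] (v : n → ℂ) (μ : Measure (unitaryGroup n ℂ))

noncomputable def fourthMoment (a b c d : n) : ℂ :=
  ∫ U, quartic ((U : Matrix n n ℂ) *ᵥ v) a b c d ∂μ

theorem fourthMoment_swap (a b c d : n) :
    fourthMoment v μ a b c d = fourthMoment v μ c b a d := by
  simp only [fourthMoment, quartic, mul_left_comm, mul_comm]

theorem fourthMoment_swap_pairs (a b c d : n) :
    fourthMoment v μ a b c d = fourthMoment v μ c d a b := by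
  simp only [fourthMoment, quartic, mul_comm]

variable [BorelSpace (unitaryGroup n ℂ)]

theorem integrable_quartic [IsFiniteMeasure μ] (a b c d : n) :
    Integrable (fun U : unitaryGroup n ℂ => quartic ((U : Matrix n n ℂ) *ᵥ v) a b c d) μ := by
  have hcont :
      Continuous fun U : unitaryGroup n ℂ => quartic ((U : Matrix n n ℂ) *ᵥ v) a b c d := by
    simp only [quartic]
    fun_prop (disch := exact continuous_mulVec_apply v _)
  refine .of_bound hcont.aestronglyMeasurable ((∑ p, ‖v p‖) ^ 4) (.of_forall fun U => ?_)
  have h := norm_mulVec_apply_le U v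
  simp only [quartic, norm_mul, Complex.norm_conj]
  calc _ ≤ (∑ p, ‖v p‖) * (∑ p, ‖v p‖) * ((∑ p, ‖v p‖) * (∑ p, ‖v p‖)) := by
        gcongr <;> exact h _
    _ = _ := by ring

theorem sum_sum_fourthMoment_eq_one [IsProbabilityMeasure μ] (hv : star v ⬝ᵥ v = 1) :
    ∑ x, ∑ z, fourthMoment v μ x x z z = 1 := by
  have hpoint : ∀ U : unitaryGroup n ℂ,
      ∑ x, ∑ z, quartic ((U : Matrix n n ℂ) *ᵥ v) x x z z = 1 := fun U => by
    simp only [quartic, ← Finset.sum_mul_sum, sum_mulVec_mul_conj, hv, one_mul]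
  unfold fourthMoment
  rw [Finset.sum_congr rfl fun x _ =>
      (integral_finsetSum _ fun z _ => integrable_quartic v μ x x z z).symm,
    ← integral_finsetSum _ fun x _ => integrable_finsetSum _ fun z _ =>
      integrable_quartic v μ x x z z]
  simp only [hpoint, integral_const, probReal_univ, one_smul]

theorem integral_comp_mulVec_mulVec [μ.IsMulLeftInvariant] (V : unitaryGroup n ℂ)
    (g : (n → ℂ) → ℂ) :
    ∫ U, g ((V : Matrix n n ℂ) *ᵥ ((U : Matrix n n ℂ) *ᵥ v)) ∂μ =
      ∫ U, g ((U : Matrix n n ℂ) *ᵥ v) ∂μ := by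
  simp only [mulVec_mulVec]
  exact integral_mul_left_eq_self (fun U : unitaryGroup n ℂ => g ((U : Matrix n n ℂ) *ᵥ v)) V

variable [μ.IsMulLeftInvariant]

theorem fourthMoment_eq_quartic_mul {d : n → ℂ} (hd : ∀ x, conj (d x) * d x = 1)
    (a b c e : n) : fourthMoment v μ a b c e = quartic d a b c e * fourthMoment v μ a b c e := by
  rw [fourthMoment, ← integral_const_mul,
    ← integral_comp_mulVec_mulVec v μ ⟨diagonal d, diagonal_mem_unitaryGroup hd⟩
      (fun w => quartic w a b c e)]
  congr 1 with U
  rw [← quartic_mul]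
  congr 1 with x
  exact mulVec_diagonal _ _ x

theorem fourthMoment_eq_zero {a b c d : n} (h : ¬((a = b ∧ c = d) ∨ (a = d ∧ c = b))) :
    fourthMoment v μ a b c d = 0 := by
  suffices ∃ k, quartic (fun x => if x = k then Complex.I else 1) a b c d ≠ 1 by
    obtain ⟨k, hk⟩ := this
    have hphase := fourthMoment_eq_quartic_mul v μ (d := fun x => if x = k then Complex.I else 1)
      (fun x => by split_ifs <;> simp) a b c d
    by_contra hne
    exact hk ((mul_eq_right₀ hne).mp hphase.symm)
  by_cases hab : a = b
  · subst hab
    have hcd : c ≠ d := fun hcd => h (Or.inl ⟨rfl, hcd⟩)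
    refine ⟨c, ?_⟩
    by_cases hac : a = c <;> simp [quartic, hac, hcd.symm, Complex.ext_iff]
  by_cases had : a = d
  · subst had
    have hcb : c ≠ b := fun hcb => h (Or.inr ⟨rfl, hcb⟩)
    refine ⟨c, ?_⟩
    by_cases hac : a = c <;> simp [quartic, hac, hcb.symm, Complex.ext_iff]
  refine ⟨a, ?_⟩
  obtain rfl | hac := eq_or_ne a c
  · norm_num [quartic, Ne.symm hab, Ne.symm had]
  · simp [quartic, Ne.symm hab, Ne.symm had, Ne.symm hac, Complex.ext_iff]

theorem fourthMoment_diag_eq_of_mulVec_apply [IsFiniteMeasure μ] {a b : n} (hab : a ≠ b)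
    (c s : ℝ) (V : unitaryGroup n ℂ)
    (hV : ∀ w, ((V : Matrix n n ℂ) *ᵥ w) a = c * w a + s * w b) :
    fourthMoment v μ a a a a = c ^ 4 * fourthMoment v μ a a a a +
      s ^ 4 * fourthMoment v μ b b b b + 4 * c ^ 2 * s ^ 2 * fourthMoment v μ a a b b := by
  have hexpand : ∀ w, quartic ((V : Matrix n n ℂ) *ᵥ w) a a a a =
      ∑ t : Bool × Bool × Bool × Bool,
        ((cond t.1 s c * cond t.2.1 s c * cond t.2.2.1 s c * cond t.2.2.2 s c : ℝ) : ℂ) *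
          quartic w (cond t.1 b a) (cond t.2.1 b a) (cond t.2.2.1 b a) (cond t.2.2.2 b a) := by
    intro w
    simp only [quartic, hV, Fintype.sum_prod_type, Fintype.sum_bool, cond_true, cond_false,
      map_add, map_mul, Complex.conj_ofReal, Complex.ofReal_mul]
    ring
  conv_lhs =>
    rw [fourthMoment, ← integral_comp_mulVec_mulVec v μ V (fun w => quartic w a a a a)]
  simp only [hexpand]
  rw [integral_finsetSum _ fun t _ => (integrable_quartic v μ _ _ _ _).const_mul _]
  simp only [integral_const_mul, ← fourthMoment.eq_1, Fintype.sum_prod_type, Fintype.sum_bool,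
    cond_true, cond_false]
  simp only [fourthMoment_eq_zero v μ, hab, hab.symm, and_false, false_and, or_self, and_self,
    not_false_eq_true, mul_zero, zero_add, add_zero]
  rw [fourthMoment_swap_pairs v μ b b a a, fourthMoment_swap v μ b a a b,
    fourthMoment_swap v μ a b b a, fourthMoment_swap_pairs v μ b b a a]
  push_cast
  ring

theorem fourthMoment_diag_eq_and_diag_eq_two_mul [IsFiniteMeasure μ] {a b : n} (hab : a ≠ b) :
    fourthMoment v μ b b b b = fourthMoment v μ a a a a ∧
      fourthMoment v μ a a a a = 2 * fourthMoment v μ a a b b := by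
  -- a rational unit vector, so that the reflection mixing `a` and `b` needs no square roots
  set y : n → ℂ := Pi.single a (3 / 5) + Pi.single b (4 / 5)
  have hy : star y ⬝ᵥ y = 1 := by
    simp [y, hab, hab.symm]
    norm_num
  set V : unitaryGroup n ℂ :=
    ⟨1 - (2 : ℂ) • vecMulVec y (star y), one_sub_two_smul_vecMulVec_mem_unitaryGroup hy⟩
  have hVw : ∀ w, (V : Matrix n n ℂ) *ᵥ w = w - (2 * (star y ⬝ᵥ w)) • y := fun w => by
    simp [V, sub_mulVec, smul_mulVec, vecMulVec_mulVec, smul_smul]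
  have ha := fourthMoment_diag_eq_of_mulVec_apply v μ hab (7 / 25) (-24 / 25) V fun w => by
    simp [hVw, y, hab]
    ring
  have hb := fourthMoment_diag_eq_of_mulVec_apply v μ hab.symm (-7 / 25) (-24 / 25) V fun w => by
    simp [hVw, y, hab.symm]
    ring
  rw [fourthMoment_swap_pairs v μ b b a a] at hb
  push_cast at ha hb
  constructor
  · linear_combination (-625 / 1152 : ℂ) * (ha - hb)
  · linear_combination (210625 / 56448 : ℂ) * ha + (625 / 196 : ℂ) * hb

theorem exists_fourthMoment_eq_mul [IsFiniteMeasure μ] : ∃ r : ℂ, ∀ a b c d : n,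
    fourthMoment v μ a b c d =
      r * ((if a = b ∧ c = d then 1 else 0) + (if a = d ∧ c = b then 1 else 0)) := by
  rcases isEmpty_or_nonempty n with hn | ⟨⟨a₀⟩⟩
  · exact ⟨0, fun a => hn.elim a⟩
  have hdiag : ∀ a, fourthMoment v μ a a a a = fourthMoment v μ a₀ a₀ a₀ a₀ := fun a => by
    obtain rfl | ha := eq_or_ne a a₀
    · rfl
    · exact (fourthMoment_diag_eq_and_diag_eq_two_mul v μ ha.symm).1
  have hoff : ∀ a c, a ≠ c → fourthMoment v μ a a c c = fourthMoment v μ a₀ a₀ a₀ a₀ / 2 :=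
    fun a c hac => by
      rw [← hdiag a, (fourthMoment_diag_eq_and_diag_eq_two_mul v μ hac).2]
      ring
  refine ⟨fourthMoment v μ a₀ a₀ a₀ a₀ / 2, fun a b c d => ?_⟩
  by_cases h₁ : a = b ∧ c = d
  · obtain ⟨rfl, rfl⟩ := h₁
    obtain rfl | hac := eq_or_ne a c
    · simp only [hdiag, and_self, if_true]
      ring
    · simp [hoff a c hac, hac]
  by_cases h₂ : a = d ∧ c = b
  · obtain ⟨rfl, rfl⟩ := h₂
    have hca : c ≠ a := fun hca => h₁ ⟨hca.symm, hca⟩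
    simp [fourthMoment_swap v μ a c c a, hoff c a hca, h₁]
  · simp [fourthMoment_eq_zero v μ (not_or.mpr ⟨h₁, h₂⟩), h₁, h₂]

theorem fourthMoment_eq [IsProbabilityMeasure μ] (hv : star v ⬝ᵥ v = 1) (a b c d : n) :
    fourthMoment v μ a b c d =
      ((if a = b ∧ c = d then 1 else 0) + (if a = d ∧ c = b then 1 else 0)) /
        (Fintype.card n * (Fintype.card n + 1)) := by
  obtain ⟨r, hr⟩ := exists_fourthMoment_eq_mul v μ
  have hnorm : r * (Fintype.card n * (Fintype.card n + 1)) = 1 := by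
    have hsum := sum_sum_fourthMoment_eq_one v μ hv
    simp [hr, Finset.sum_add_distrib, ← Finset.mul_sum, and_iff_left_of_imp Eq.symm] at hsum
    linear_combination hsum
  rw [hr, eq_div_iff (right_ne_zero_of_mul_eq_one hnorm)]
  linear_combination ((if a = b ∧ c = d then 1 else 0) + (if a = d ∧ c = b then 1 else 0)) * hnorm

end Haar

theorem fourthMoment_purity_eq {ι κ : Type*} [Fintype ι] [DecidableEq ι] [Fintype κ]
    [DecidableEq κ] [MeasurableSpace (unitaryGroup (ι × κ) ℂ)]
    [BorelSpace (unitaryGroup (ι × κ) ℂ)] (v : ι × κ → ℂ) (hv : star v ⬝ᵥ v = 1)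
    (μ : Measure (unitaryGroup (ι × κ) ℂ)) [μ.IsMulLeftInvariant] [IsProbabilityMeasure μ]
    (i i' : ι) (j j' : κ) :
    fourthMoment v μ (i, j) (i', j) (i', j') (i, j') =
      ((if i = i' then 1 else 0) + (if j = j' then 1 else 0)) /
        (Fintype.card ι * Fintype.card κ * (Fintype.card ι * Fintype.card κ + 1)) := by
  simp [fourthMoment_eq v μ hv, and_iff_left_of_imp Eq.symm]

theorem trace_ptrace2_mul_self_vecMulVec {d₁ d₂ : ℕ} (w : Fin d₁ × Fin d₂ → ℂ) :
    (ptrace2 (vecMulVec w (star w)) * ptrace2 (vecMulVec w (star w))).trace =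
      ∑ x : (Fin d₁ × Fin d₁) × (Fin d₂ × Fin d₂),
        quartic w (x.1.1, x.2.1) (x.1.2, x.2.1) (x.1.2, x.2.2) (x.1.1, x.2.2) := by
  simp only [trace, diag_apply, mul_apply, ptrace2, of_apply, vecMulVec_apply, Pi.star_apply,
    Finset.sum_mul_sum, quartic, Complex.star_def, Fintype.sum_prod_type]

end HaarUnitary

open HaarUnitary

theorem stmt12_general (d₁ d₂ : ℕ) (hd₁ : 1 ≤ d₁) (hd₂ : 1 ≤ d₂)
    (v : Fin d₁ × Fin d₂ → ℂ) (hv : dotProduct (star v) v = 1)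
    [MeasurableSpace (Matrix.unitaryGroup (Fin d₁ × Fin d₂) ℂ)]
    [BorelSpace (Matrix.unitaryGroup (Fin d₁ × Fin d₂) ℂ)]
    (μ : Measure (Matrix.unitaryGroup (Fin d₁ × Fin d₂) ℂ))
    [μ.IsHaarMeasure] [IsProbabilityMeasure μ] :
    ∫ U, (ptrace2 ((U : Matrix (Fin d₁ × Fin d₂) (Fin d₁ × Fin d₂) ℂ) *
              Matrix.vecMulVec v (star v) *
              ((U : Matrix (Fin d₁ × Fin d₂) (Fin d₁ × Fin d₂) ℂ))ᴴ) *
          ptrace2 ((U : Matrix (Fin d₁ × Fin d₂) (Fin d₁ × Fin d₂) ℂ) *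
              Matrix.vecMulVec v (star v) *
              ((U : Matrix (Fin d₁ × Fin d₂) (Fin d₁ × Fin d₂) ℂ))ᴴ)).trace ∂μ
      = ((d₁ : ℂ) + (d₂ : ℂ)) / ((d₁ : ℂ) * (d₂ : ℂ) + 1) := by
  simp only [mul_vecMulVec_star_mul_conjTranspose, trace_ptrace2_mul_self_vecMulVec]
  rw [integral_finsetSum _ fun x _ => integrable_quartic v μ _ _ _ _]
  simp only [← fourthMoment.eq_1, Fintype.sum_prod_type]
  simp only [fourthMoment_purity_eq v hv μ, Fintype.card_fin, ← Finset.sum_div,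
    Finset.sum_add_distrib, Finset.sum_ite_eq, Finset.sum_const, Finset.mem_univ, if_true,
    Finset.card_univ, smul_ite, nsmul_eq_mul, mul_one, mul_zero]
  have h₁ : (d₁ : ℂ) ≠ 0 := Nat.cast_ne_zero.mpr (by omega)
  have h₂ : (d₂ : ℂ) ≠ 0 := Nat.cast_ne_zero.mpr (by omega)
  have h₃ : (d₁ : ℂ) * d₂ + 1 ≠ 0 := by exact_mod_cast Nat.succ_ne_zero (d₁ * d₂)
  field_simp
  ring

/-- Lubkin's formula / the quantum instance of the paper's Page-scenario computation:
the Haar-averaged purity of the reduced state of a random pure bipartite state. -/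
theorem stmt12 (d₁ d₂ : ℕ) (hd₁ : 1 ≤ d₁) (hd₂ : 1 ≤ d₂) (hd : 2 ≤ d₁ * d₂)
    (v : Fin d₁ × Fin d₂ → ℂ) (hv : dotProduct (star v) v = 1)
    [MeasurableSpace (Matrix.unitaryGroup (Fin d₁ × Fin d₂) ℂ)]
    [BorelSpace (Matrix.unitaryGroup (Fin d₁ × Fin d₂) ℂ)]
    (μ : Measure (Matrix.unitaryGroup (Fin d₁ × Fin d₂) ℂ))
    [μ.IsHaarMeasure] [IsProbabilityMeasure μ] :
    ∫ U, (ptrace2 ((U : Matrix (Fin d₁ × Fin d₂) (Fin d₁ × Fin d₂) ℂ) *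
              Matrix.vecMulVec v (star v) *
              ((U : Matrix (Fin d₁ × Fin d₂) (Fin d₁ × Fin d₂) ℂ))ᴴ) *
          ptrace2 ((U : Matrix (Fin d₁ × Fin d₂) (Fin d₁ × Fin d₂) ℂ) *
              Matrix.vecMulVec v (star v) *
              ((U : Matrix (Fin d₁ × Fin d₂) (Fin d₁ × Fin d₂) ℂ))ᴴ)).trace ∂μ
      = ((d₁ : ℂ) + (d₂ : ℂ)) / ((d₁ : ℂ) * (d₂ : ℂ) + 1) :=
  stmt12_general d₁ d₂ hd₁ hd₂ v hv μ
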